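/- For every s with 3/2<s<4 there is a constant c=c(s)>0 such that for every f:ℝ³_x×ℝ³_v→ℝ of class C² in x with the displayed norms finite: ‖⟨x⟩^s∇_xf‖_{L^∞_{x,v}} ≤ c( ‖⟨x⟩^{2s}f‖_{L^∞_{x,v}} + ‖∇²_xf‖_{L^∞_{x,v}} ). -/

import Mathlib

open MeasureTheory Real Filter
open scoped ENNReal RealInnerProductSpace NNReal

noncomputable section

abbrev V3 : Type := EuclideanSpace ℝ (Fin 3)

/-- Japanese bracket `⟨x⟩ = (1+‖x‖²)^{1/2}`. -/
def jap {E : Type*} [SeminormedAddGroup E] (x : E) : ℝ := Real.sqrt (1 + ‖x‖ ^ 2)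

lemma one_le_jap {E : Type*} [SeminormedAddGroup E] (x : E) : 1 ≤ jap x := by
  rw [jap]
  calc (1:ℝ) = Real.sqrt 1 := Real.sqrt_one.symm
    _ ≤ Real.sqrt (1 + ‖x‖ ^ 2) := Real.sqrt_le_sqrt (le_add_of_nonneg_right (sq_nonneg _))

lemma jap_pos {E : Type*} [SeminormedAddGroup E] (x : E) : 0 < jap x :=
  lt_of_lt_of_le one_pos (one_le_jap x)

lemma norm_snd_deriv_eq (g : V3 → ℝ) (z : V3) :
    ‖fderiv ℝ (fderiv ℝ g) z‖ = ‖iteratedFDeriv ℝ 2 g z‖ := by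
  have h1 : ‖iteratedFDeriv ℝ 1 (fderiv ℝ g) z‖ = ‖iteratedFDeriv ℝ 2 g z‖ :=
    norm_iteratedFDeriv_fderiv
  have h0 : ‖iteratedFDeriv ℝ 0 (fderiv ℝ (fderiv ℝ g)) z‖
      = ‖iteratedFDeriv ℝ 1 (fderiv ℝ g) z‖ := norm_iteratedFDeriv_fderiv
  rw [norm_iteratedFDeriv_zero] at h0
  rw [h0, h1]

set_option maxHeartbeats 1000000 in
lemma key (s a b : ℝ) (hs₁ : 3 / 2 < s) (hs₂ : s < 4) (g : V3 → ℝ) (hg : ContDiff ℝ 2 g)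
    (ha : ∀ y, jap y ^ (2 * s) * |g y| ≤ a) (hb : ∀ y, ‖iteratedFDeriv ℝ 2 g y‖ ≤ b)
    (x : V3) : jap x ^ s * ‖gradient g x‖ ≤ 257 * (a + b) := by
  have ha0 : 0 ≤ a := le_trans (mul_nonneg (Real.rpow_pos_of_pos (jap_pos 0) _).le (abs_nonneg _)) (ha 0)
  have hb0 : 0 ≤ b := le_trans (norm_nonneg _) (hb 0)
  have hJ1 : (1:ℝ) ≤ jap x := one_le_jap x
  have hJ0 : (0:ℝ) < jap x := jap_pos x
  set J : ℝ := jap x with hJdef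
  set r : ℝ := J ^ (-s) with hrdef
  have hr0 : 0 < r := Real.rpow_pos_of_pos hJ0 _
  have hr1 : r ≤ 1 := Real.rpow_le_one_of_one_le_of_nonpos hJ1 (by linarith)
  set G : V3 := gradient g x with hGdef
  by_cases hG : G = 0
  · rw [hG, norm_zero, mul_zero]
    have : 0 ≤ J ^ s := (Real.rpow_pos_of_pos hJ0 s).le
    linarith
  have hN0 : 0 < ‖G‖ := norm_pos_iff.mpr hG
  set h : V3 := (r / ‖G‖) • G with hhdef
  have hnh : ‖h‖ = r := by
    rw [hhdef, norm_smul, norm_div, Real.norm_eq_abs, Real.norm_eq_abs,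
      abs_of_pos hr0, abs_of_pos hN0, div_mul_cancel₀ _ (ne_of_gt hN0)]
  -- differentiability facts
  have hgd : Differentiable ℝ g := hg.differentiable (by norm_num)
  have hg1 : ContDiff ℝ 1 (fderiv ℝ g) := hg.fderiv_right (by norm_num)
  have hgd2 : Differentiable ℝ (fderiv ℝ g) := hg1.differentiable (by norm_num)
  -- Lipschitz bound for fderiv g
  have hlip : ∀ y : V3, ‖fderiv ℝ g y - fderiv ℝ g x‖ ≤ b * ‖y - x‖ := by
    intro y
    have := convex_univ.norm_image_sub_le_of_norm_fderiv_le
      (f := fderiv ℝ g) (C := b) (fun z _ => (hgd2 z))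
      (fun z _ => by rw [norm_snd_deriv_eq]; exact hb z)
      (Set.mem_univ x) (Set.mem_univ y)
    exact this
  -- Taylor estimate on the closed ball
  set L : V3 →L[ℝ] ℝ := fderiv ℝ g x with hLdef
  have htaylor : ‖g (x + h) - g x - L h‖ ≤ (b * r) * r := by
    have hmvt := (convex_closedBall x r).norm_image_sub_le_of_norm_fderiv_le
      (f := fun y => g y - L y) (C := b * r)
      (fun z _ => (hgd z).sub (L.differentiable z))
      (fun z hz => by
        rw [fderiv_fun_sub (hgd z) (L.differentiable z), L.fderiv]
        calc ‖fderiv ℝ g z - L‖ ≤ b * ‖z - x‖ := hlip z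
          _ ≤ b * r := by
              apply mul_le_mul_of_nonneg_left _ hb0
              simpa [dist_eq_norm] using Metric.mem_closedBall.mp hz)
      (Metric.mem_closedBall.mpr (by rw [dist_self]; exact hr0.le))
      (Metric.mem_closedBall.mpr (le_of_eq (by rw [dist_eq_norm, add_sub_cancel_left, hnh])))
    have he : (g (x + h) - L (x + h)) - (g x - L x) = g (x + h) - g x - L h := by
      rw [map_add]; ring
    rw [he] at hmvt
    calc ‖g (x + h) - g x - L h‖ ≤ b * r * ‖x + h - x‖ := hmvt
      _ = b * r * r := by rw [add_sub_cancel_left, hnh]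
  -- L h = r * ‖G‖
  have hLh : L h = r * ‖G‖ := by
    have hinner : ⟪G, h⟫ = L h := by
      rw [hGdef, gradient, InnerProductSpace.toDual_symm_apply]
    rw [← hinner, hhdef, real_inner_smul_right, real_inner_self_eq_norm_sq]
    field_simp
  -- pointwise bound on g
  have hgb : ∀ y : V3, jap y ^ (2 * s) * |g y| ≤ a := ha
  -- Peetre: J ≤ 2 * jap (x+h)
  set K : ℝ := jap (x + h) with hKdef
  have hK1 : (1:ℝ) ≤ K := one_le_jap _
  have hK0 : (0:ℝ) < K := jap_pos _
  have hJK : J ≤ 2 * K := by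
    have hx : ‖x‖ ≤ ‖x + h‖ + 1 := by
      calc ‖x‖ = ‖(x + h) - h‖ := by rw [add_sub_cancel_right]
        _ ≤ ‖x + h‖ + ‖h‖ := norm_sub_le _ _
        _ ≤ ‖x + h‖ + 1 := by rw [hnh]; linarith
    have hquad : 1 + ‖x‖ ^ 2 ≤ 4 * (1 + ‖x + h‖ ^ 2) := by
      nlinarith [hx, norm_nonneg x, norm_nonneg (x + h), sq_nonneg (‖x + h‖ - 1)]
    calc J = Real.sqrt (1 + ‖x‖ ^ 2) := by rw [hJdef, jap]
      _ ≤ Real.sqrt (4 * (1 + ‖x + h‖ ^ 2)) := Real.sqrt_le_sqrt hquad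
      _ = 2 * K := by
          rw [Real.sqrt_mul (by norm_num : (0:ℝ) ≤ 4), hKdef, jap,
            show Real.sqrt 4 = 2 by
              rw [show (4:ℝ) = 2 ^ 2 by norm_num, Real.sqrt_sq (by norm_num : (0:ℝ) ≤ 2)]]
  -- J^{2s} ≤ 256 * K^{2s}
  have hpow : J ^ (2 * s) ≤ 256 * K ^ (2 * s) := by
    calc J ^ (2 * s) ≤ (2 * K) ^ (2 * s) :=
          Real.rpow_le_rpow hJ0.le hJK (by linarith)
      _ = (2:ℝ) ^ (2 * s) * K ^ (2 * s) := Real.mul_rpow (by norm_num) hK0.le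
      _ ≤ 256 * K ^ (2 * s) := by
          apply mul_le_mul_of_nonneg_right _ (Real.rpow_pos_of_pos hK0 _).le
          calc (2:ℝ) ^ (2 * s) ≤ (2:ℝ) ^ (8:ℝ) :=
                Real.rpow_le_rpow_of_exponent_le (by norm_num) (by linarith)
            _ = 256 := by
                rw [show (8:ℝ) = ((8:ℕ):ℝ) by norm_num, Real.rpow_natCast]; norm_num
  -- main chain
  have hmain : r * ‖G‖ ≤ |g (x + h)| + |g x| + b * r ^ 2 := by
    have h1 : r * ‖G‖ ≤ |g (x + h) - g x - L h| + |g (x + h)| + |g x| := by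
      have : r * ‖G‖ = -(g (x + h) - g x - L h) + g (x + h) - g x := by
        rw [← hLh]; ring
      rw [this]
      have a1 : -(g (x + h) - g x - L h) ≤ |g (x + h) - g x - L h| := neg_le_abs _
      have a2 : g (x + h) ≤ |g (x + h)| := le_abs_self _
      have a3 : -(g x) ≤ |g x| := neg_le_abs _
      linarith
    have h2 : |g (x + h) - g x - L h| ≤ b * r ^ 2 := by
      have := htaylor; rw [Real.norm_eq_abs] at this; nlinarith
    linarith
  -- multiply by J^{2s}
  have hJ2s0 : 0 < J ^ (2 * s) := Real.rpow_pos_of_pos hJ0 _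
  have e1 : J ^ (2 * s) * r = J ^ s := by
    rw [hrdef, ← Real.rpow_add hJ0, show 2 * s + -s = s by ring]
  have e2 : J ^ (2 * s) * r ^ 2 = 1 := by
    rw [hrdef, ← Real.rpow_natCast (J ^ (-s)) 2, ← Real.rpow_mul hJ0.le,
      ← Real.rpow_add hJ0]
    norm_num
    rw [show 2 * s + -(s * 2) = 0 by ring, Real.rpow_zero]
  have hga : J ^ (2 * s) * |g (x + h)| ≤ 256 * a := by
    calc J ^ (2 * s) * |g (x + h)| ≤ 256 * K ^ (2 * s) * |g (x + h)| :=
          mul_le_mul_of_nonneg_right hpow (abs_nonneg _)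
      _ = 256 * (K ^ (2 * s) * |g (x + h)|) := by ring
      _ ≤ 256 * a := by have := hgb (x + h); rw [← hKdef] at this; linarith
  have hgx : J ^ (2 * s) * |g x| ≤ a := hgb x
  have final : J ^ s * ‖G‖ ≤ 257 * a + b := by
    have := mul_le_mul_of_nonneg_left hmain hJ2s0.le
    rw [show J ^ (2 * s) * (r * ‖G‖) = (J ^ (2 * s) * r) * ‖G‖ by ring, e1] at this
    nlinarith
  linarith

/-- Proposition B.1 (ii): weighted interpolation inequality for `∇_x f`, `3/2 < s < 4`. -/
theorem statement_19 (s : ℝ) (hs₁ : 3 / 2 < s) (hs₂ : s < 4) :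
    ∃ c > 0, ∀ f : V3 → V3 → ℝ,
      (∀ v : V3, ContDiff ℝ 2 (fun x : V3 => f x v)) →
      (⨆ x : V3, ⨆ v : V3, (‖jap x ^ s * ‖gradient (fun x' => f x' v) x‖‖₊ : ℝ≥0∞)) ≤
        ENNReal.ofReal c *
          ((⨆ x : V3, ⨆ v : V3, (‖jap x ^ (2 * s) * f x v‖₊ : ℝ≥0∞))
            + ⨆ x : V3, ⨆ v : V3, (‖iteratedFDeriv ℝ 2 (fun x' => f x' v) x‖₊ : ℝ≥0∞)) := by
  refine ⟨257, by norm_num, ?_⟩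
  intro f hf
  set A := ⨆ x : V3, ⨆ v : V3, (‖jap x ^ (2 * s) * f x v‖₊ : ℝ≥0∞) with hA
  set B := ⨆ x : V3, ⨆ v : V3,
    (‖iteratedFDeriv ℝ 2 (fun x' => f x' v) x‖₊ : ℝ≥0∞) with hB
  have hc0 : ENNReal.ofReal 257 ≠ 0 := by
    simp [ENNReal.ofReal_eq_zero]
  by_cases hAtop : A = ⊤
  · rw [hAtop, top_add, ENNReal.mul_top hc0]; exact le_top
  by_cases hBtop : B = ⊤
  · rw [hBtop, add_top, ENNReal.mul_top hc0]; exact le_top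
  set a : ℝ := A.toReal with ha'
  set b : ℝ := B.toReal with hb'
  have hav : ∀ (y v : V3), jap y ^ (2 * s) * |f y v| ≤ a := by
    intro y v
    have h1 : (‖jap y ^ (2 * s) * f y v‖₊ : ℝ≥0∞) ≤ A :=
      le_iSup_of_le y (le_iSup (fun v' => (‖jap y ^ (2 * s) * f y v'‖₊ : ℝ≥0∞)) v)
    have h2 := ENNReal.toReal_mono hAtop h1
    simp only [ENNReal.coe_toReal, coe_nnnorm] at h2
    rwa [Real.norm_eq_abs, abs_mul,
      abs_of_nonneg (Real.rpow_pos_of_pos (jap_pos y) _).le] at h2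
  have hbv : ∀ (y v : V3), ‖iteratedFDeriv ℝ 2 (fun x' => f x' v) y‖ ≤ b := by
    intro y v
    have h1 : (‖iteratedFDeriv ℝ 2 (fun x' => f x' v) y‖₊ : ℝ≥0∞) ≤ B :=
      le_iSup_of_le y
        (le_iSup (fun v' => (‖iteratedFDeriv ℝ 2 (fun x' => f x' v') y‖₊ : ℝ≥0∞)) v)
    have h2 := ENNReal.toReal_mono hBtop h1
    simpa using h2
  have hAB : A + B = ENNReal.ofReal (a + b) := by
    rw [ENNReal.ofReal_add ENNReal.toReal_nonneg ENNReal.toReal_nonneg,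
      ENNReal.ofReal_toReal hAtop, ENNReal.ofReal_toReal hBtop]
  apply iSup_le; intro x; apply iSup_le; intro v
  have hk := key s a b hs₁ hs₂ (fun x' => f x' v) (hf v)
    (fun y => hav y v) (fun y => hbv y v) x
  rw [← ENNReal.ofReal_coe_nnreal, coe_nnnorm, hAB, ← ENNReal.ofReal_mul (by norm_num)]
  apply ENNReal.ofReal_le_ofReal
  rw [Real.norm_eq_abs, abs_of_nonneg
    (mul_nonneg (Real.rpow_pos_of_pos (jap_pos x) _).le (norm_nonneg _))]
  exact hk
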